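/- Let G be an ADMG over finite nodes V, and A, B, C pairwise disjoint with V = AN_G(A ∪ B ∪ C) and A m-separated from C by B. Then there exist A⁺ ⊇ A, C⁺ ⊇ C with A⁺ ∩ C⁺ = ∅, A⁺ ∪ B ∪ C⁺ = V, and A⁺ m-separated from C⁺ by B in G. -/

import Mathlib

/-- The kind of a step along a path in a mixed graph: a forward directed edge,
a backward directed edge, or a bi-directed edge. -/
inductive StepKind : Type
  | fwd | bwd | bidir

/-- Whether a step has an arrowhead at its left endpoint. -/
def StepKind.headLeft : StepKind → Prop
  | .fwd => False
  | _ => True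

/-- Whether a step has an arrowhead at its right endpoint. -/
def StepKind.headRight : StepKind → Prop
  | .bwd => False
  | _ => True

/-- A directed mixed graph: directed edges `dir` and bi-directed edges `bi`. -/
structure MixedGraph (V : Type*) where
  dir : V → V → Prop
  bi : V → V → Prop

namespace MixedGraph

variable {V : Type*}

/-- Validity of a step of the given kind between `u` (left) and `v` (right). -/
def stepOK (G : MixedGraph V) (u v : V) : StepKind → Prop
  | .fwd => G.dir u v
  | .bwd => G.dir v u
  | .bidir => G.bi u v

/-- A path in a mixed graph: distinct vertices `verts 0, …, verts n` joined by
edges of the recorded kinds. -/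
structure Path (G : MixedGraph V) where
  n : ℕ
  verts : Fin (n + 1) → V
  steps : Fin n → StepKind
  inj : Function.Injective verts
  ok : ∀ i : Fin n, G.stepOK (verts i.castSucc) (verts i.succ) (steps i)

/-- A mixed graph is acyclic if there is no nontrivial directed cycle. -/
def Acyclic (G : MixedGraph V) : Prop := ∀ v, ¬ Relation.TransGen G.dir v v

/-- `v` is a descendant of `u` (every node is its own descendant). -/
def descends (G : MixedGraph V) (u v : V) : Prop := Relation.ReflTransGen G.dir u v

/-- Ancestors of a set of nodes (via directed edges; each node is its own ancestor). -/
def ancestorsOf (G : MixedGraph V) (S : Set V) : Set V :=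
  {u | ∃ s ∈ S, Relation.ReflTransGen G.dir u s}

/-- The interior vertex `verts j` (for `0 < j < n+1`, i.e. `j` regarded in `Fin n`
with `0 < j`) is a collider on the path: both adjacent edges have an arrowhead at it. -/
def IsCollider (G : MixedGraph V) (p : Path G) (j : Fin p.n) (_hj : 0 < j.val) : Prop :=
  (p.steps ⟨j.val - 1, lt_of_le_of_lt (Nat.sub_le _ _) j.isLt⟩).headRight ∧
    (p.steps j).headLeft

/-- A path is blocked by `B` if some interior non-collider lies in `B`, or some
interior collider has no descendant in `B`. -/
def Blocked (G : MixedGraph V) (p : Path G) (B : Set V) : Prop :=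
  ∃ (j : Fin p.n) (hj : 0 < j.val),
    (¬ G.IsCollider p j hj ∧ p.verts j.castSucc ∈ B) ∨
      (G.IsCollider p j hj ∧ ∀ w ∈ B, ¬ G.descends (p.verts j.castSucc) w)

/-- m-separation (d-separation when there are no bi-directed edges): every path
from `A` to `C` is blocked by `B`. -/
def MSep (G : MixedGraph V) (A C B : Set V) : Prop :=
  ∀ p : Path G, p.verts 0 ∈ A → p.verts (Fin.last p.n) ∈ C → G.Blocked p B

/-- Subgraph induced on a set `W` of vertices. -/
def restrict (G : MixedGraph V) (W : Set V) : MixedGraph V where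
  dir u v := G.dir u v ∧ u ∈ W ∧ v ∈ W
  bi u v := G.bi u v ∧ u ∈ W ∧ v ∈ W

/-- Two distinct nodes are collider-connected if some path between them has all
interior nodes colliders (adjacent nodes are collider-connected). This is the
adjacency of the augmented graph. -/
def collConn (G : MixedGraph V) (u v : V) : Prop :=
  u ≠ v ∧ ∃ p : Path G, p.verts 0 = u ∧ p.verts (Fin.last p.n) = v ∧
    ∀ (j : Fin p.n) (hj : 0 < j.val), G.IsCollider p j hj

end MixedGraph

/-- Separation in an undirected graph with adjacency `adj`: there is no walk from
`A` to `C` avoiding `B`. -/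
def USep {V : Type*} (adj : V → V → Prop) (A C B : Set V) : Prop :=
  ∀ a ∈ A, ∀ c ∈ C,
    ¬ Relation.ReflTransGen (fun u v => adj u v ∧ u ∉ B ∧ v ∉ B) a c

/-!
Let `C⁺` be `C` together with the vertices outside `A ∪ B` that are m-connected to `C` given `B`,
and `A⁺` the complement of `B ∪ C⁺`. It suffices that every vertex m-connected to `C⁺` is
m-connected to `C`: such a vertex in `A⁺` would lie in `A`, contradicting `A ⊥ C | B`, or in `C⁺`.
A walk m-connecting `u` to `v ∈ C⁺` continues along a walk from `v` to `C` unless `v` becomes a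
collider outside `An(B)`. Then, as every vertex is an ancestor of `A ∪ B ∪ C`, a directed path from
`v` avoiding `B` reaches `C`, continuing the walk instead, or `A`, which together with the walk from
`v` to `C` m-connects `A` to `C`. Walks rather than paths are used throughout, since an
m-connecting walk shortens to an m-connecting path.
-/

namespace StepKind

theorem headLeft_iff_ne_fwd {k : StepKind} : k.headLeft ↔ k ≠ .fwd := by
  cases k <;> simp [headLeft]

theorem headRight_iff_ne_bwd {k : StepKind} : k.headRight ↔ k ≠ .bwd := by
  cases k <;> simp [headRight]

end StepKind

namespace MixedGraph

variable {V : Type*} {G : MixedGraph V} {B : Set V}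

theorem mem_ancestorsOf_of_dir {x y : V} (hxy : G.dir x y) (hy : y ∈ G.ancestorsOf B) :
    x ∈ G.ancestorsOf B :=
  let ⟨s, hs, hys⟩ := hy
  ⟨s, hs, .head hxy hys⟩

theorem mem_ancestorsOf_or_reflTransGen {x t : V} (h : Relation.ReflTransGen G.dir x t) :
    x ∈ G.ancestorsOf B ∨
      (t ∉ B ∧ Relation.ReflTransGen (fun a b => G.dir a b ∧ a ∉ B ∧ b ∉ B) x t) := by
  refine or_iff_not_imp_left.2 fun hx => ?_
  induction h with
  | refl => exact ⟨fun ht => hx ⟨x, ht, .refl⟩, .refl⟩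
  | @tail y z hxy hyz ih =>
    have hz : z ∉ B := fun hz => hx ⟨z, hz, hxy.tail hyz⟩
    exact ⟨hz, ih.2.tail ⟨hyz, ih.1, hz⟩⟩

/-- `x` does not block a walk given `B` when entered by a step of kind `kL` and left by one of
kind `kR`. -/
def OpenAt (G : MixedGraph V) (B : Set V) (x : V) (kL kR : StepKind) : Prop :=
  (kL.headRight ∧ kR.headLeft → x ∈ G.ancestorsOf B) ∧
    (¬ (kL.headRight ∧ kR.headLeft) → x ∉ B)

/-- A walk: like a `Path`, but vertices may repeat. It is indexed by `ℕ`; `vert i` for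
`i > length` and `kind i` for `i ≥ length` are junk. -/
structure Walk (G : MixedGraph V) where
  length : ℕ
  vert : ℕ → V
  kind : ℕ → StepKind
  ok : ∀ i < length, G.stepOK (vert i) (vert (i + 1)) (kind i)

namespace Walk

def Active (w : G.Walk) (B : Set V) : Prop :=
  ∀ i, 0 < i → i < w.length → G.OpenAt B (w.vert i) (w.kind (i - 1)) (w.kind i)

@[simps]
def single {u v : V} (k : StepKind) (h : G.stepOK u v k) : G.Walk where
  length := 1
  vert i := if i = 0 then u else v
  kind _ := k
  ok i hi := by
    obtain rfl : i = 0 := by omega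
    simpa using h

@[simps]
def nil (v : V) : G.Walk where
  length := 0
  vert _ := v
  kind _ := .fwd
  ok _ h := absurd h (Nat.not_lt_zero _)

def append (w₁ w₂ : G.Walk) (h : w₁.vert w₁.length = w₂.vert 0) : G.Walk where
  length := w₁.length + w₂.length
  vert i := if i < w₁.length then w₁.vert i else w₂.vert (i - w₁.length)
  kind i := if i < w₁.length then w₁.kind i else w₂.kind (i - w₁.length)
  ok i hi := by
    rcases lt_trichotomy (i + 1) w₁.length with hlt | heq | hgt
    · simpa [hlt, (Nat.lt_succ_self i).trans hlt] using w₁.ok i (by omega)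
    · simpa [← heq, ← h] using w₁.ok i (by omega)
    · simpa [show ¬ i < w₁.length by omega, show ¬ i + 1 < w₁.length by omega,
        show i + 1 - w₁.length = i - w₁.length + 1 by omega] using w₂.ok (i - w₁.length) (by omega)

@[simps]
def take (w : G.Walk) (i : ℕ) (hi : i ≤ w.length) : G.Walk where
  length := i
  vert := w.vert
  kind := w.kind
  ok j hj := w.ok j (by omega)

@[simps]
def drop (w : G.Walk) (j : ℕ) : G.Walk where
  length := w.length - j
  vert i := w.vert (i + j)
  kind i := w.kind (i + j)
  ok i hi := by
    rw [Nat.add_right_comm]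
    exact w.ok _ (by omega)

variable {w w₁ w₂ : G.Walk}

@[simp]
theorem append_vert_zero (h : w₁.vert w₁.length = w₂.vert 0) :
    (w₁.append w₂ h).vert 0 = w₁.vert 0 := by
  by_cases h₁ : 0 < w₁.length
  · simp [Walk.append, h₁]
  · simp [Walk.append, ← h, show w₁.length = 0 by omega]

@[simp]
theorem append_vert_length (h : w₁.vert w₁.length = w₂.vert 0) :
    (w₁.append w₂ h).vert (w₁.append w₂ h).length = w₂.vert w₂.length := by
  simp [Walk.append]

theorem Active.append (h₁ : w₁.Active B) (h₂ : w₂.Active B)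
    {h : w₁.vert w₁.length = w₂.vert 0}
    (hjoin : 0 < w₁.length → 0 < w₂.length →
      G.OpenAt B (w₂.vert 0) (w₁.kind (w₁.length - 1)) (w₂.kind 0)) :
    (w₁.append w₂ h).Active B := by
  intro i hi hin
  simp only [Walk.append] at hin ⊢
  rcases lt_trichotomy i w₁.length with hlt | rfl | hgt
  · simpa [hlt, show i - 1 < w₁.length by omega] using h₁ i hi hlt
  · simpa [hi] using hjoin hi (by omega)
  · simpa [show ¬ i < w₁.length by omega, show ¬ i - 1 < w₁.length by omega,
      show i - 1 - w₁.length = i - w₁.length - 1 by omega]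
      using h₂ (i - w₁.length) (by omega) (by omega)

theorem Active.take (hw : w.Active B) {i : ℕ} (hi : i ≤ w.length) : (w.take i hi).Active B :=
  fun j hj hji => hw j hj (by simp only [Walk.take] at hji; omega)

theorem Active.drop (hw : w.Active B) (j : ℕ) : (w.drop j).Active B := by
  intro i hi hin
  simp only [Walk.drop] at hin ⊢
  simpa [show i + j - 1 = i - 1 + j by omega] using hw (i + j) (by omega) (by omega)

/-- Following forward steps from `vert i`, the first step that is not forward makes a collider,
which is open only if it is an ancestor of `B`. -/
theorem Active.vert_mem_ancestorsOf (hw : w.Active B) {i j : ℕ} (hij : i < j) (hj : j < w.length)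
    (hi : w.kind i = .fwd) (hj' : w.kind j ≠ .fwd) : w.vert i ∈ G.ancestorsOf B := by
  suffices h : ∀ d k, k + d = j → w.vert k ∈ G.ancestorsOf B ∨ w.kind k ≠ .fwd from
    (h (j - i) i (by omega)).resolve_right (not_not.2 hi)
  intro d
  induction d with
  | zero => rintro k rfl; exact .inr hj'
  | succ d ih =>
    intro k hkd
    refine or_iff_not_imp_right.2 fun hk => ?_
    rw [not_not] at hk
    have hstep : G.dir (w.vert k) (w.vert (k + 1)) := by
      simpa [hk, stepOK] using w.ok k (by omega)
    refine mem_ancestorsOf_of_dir hstep ((ih (k + 1) (by omega)).elim id fun hne => ?_)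
    exact (hw (k + 1) (by omega) (by omega)).1
      ⟨by simp [hk, StepKind.headRight], StepKind.headLeft_iff_ne_fwd.2 hne⟩

theorem Active.openAt_of_vert_eq (hw : w.Active B) {i j : ℕ} (hi : 0 < i) (hij : i < j)
    (hj : j < w.length) (h : w.vert i = w.vert j) :
    G.OpenAt B (w.vert i) (w.kind (i - 1)) (w.kind j) := by
  have hi' := hw i hi (by omega)
  have hj' := hw j (by omega) hj
  rw [← h] at hj'
  refine ⟨fun ⟨hL, hR⟩ => ?_, fun hnc => ?_⟩
  · by_cases hiL : (w.kind i).headLeft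
    · exact hi'.1 ⟨hL, hiL⟩
    by_cases hjR : (w.kind (j - 1)).headRight
    · exact hj'.1 ⟨hjR, hR⟩
    rw [StepKind.headLeft_iff_ne_fwd, not_not] at hiL
    have hjR' : w.kind (j - 1) ≠ .fwd := by
      rw [StepKind.headRight_iff_ne_bwd, not_not] at hjR
      simp [hjR]
    have hlt : i < j - 1 := lt_of_le_of_ne (by omega) fun he => hjR' (he ▸ hiL)
    exact hw.vert_mem_ancestorsOf hlt (by omega) hiL hjR'
  · rcases not_and_or.1 hnc with hL | hR
    · exact hi'.2 fun hc => hL hc.1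
    · exact hj'.2 fun hc => hR hc.2

theorem Active.shortcut (hw : w.Active B) {i j : ℕ} (hij : i < j) (hj : j ≤ w.length)
    (h : w.vert i = w.vert j) :
    ((w.take i (by omega)).append (w.drop j) (by simpa using h)).Active B := by
  refine (hw.take _).append (hw.drop j) fun hi hj' => ?_
  simp only [take_length, take_kind, drop_length, drop_vert, drop_kind, zero_add] at hj' ⊢
  rw [← h]
  exact hw.openAt_of_vert_eq hi hij (by omega) h

theorem Active.exists_injOn (hw : w.Active B) :
    ∃ w' : G.Walk, w'.vert 0 = w.vert 0 ∧ w'.vert w'.length = w.vert w.length ∧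
      w'.Active B ∧ Set.InjOn w'.vert (Set.Iic w'.length) := by
  induction hn : w.length using Nat.strong_induction_on generalizing w with
  | _ n ih =>
  by_cases hinj : Set.InjOn w.vert (Set.Iic w.length)
  · exact ⟨w, rfl, hn ▸ rfl, hw, hinj⟩
  obtain ⟨i, j, hij, hj, h⟩ : ∃ i j, i < j ∧ j ≤ w.length ∧ w.vert i = w.vert j := by
    simp only [Set.InjOn, Set.mem_Iic, not_forall] at hinj
    obtain ⟨a, ha, b, hb, hab, hne⟩ := hinj
    rcases Nat.lt_or_gt_of_ne hne with hlt | hlt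
    exacts [⟨a, b, hlt, hb, hab⟩, ⟨b, a, hlt, ha, hab.symm⟩]
  obtain ⟨w', h0, hl, hw', hinj'⟩ :=
    ih _ (by simp only [Walk.append, take_length, drop_length]; omega) (hw.shortcut hij hj h) rfl
  refine ⟨w', ?_, ?_, hw', hinj'⟩
  · rw [h0, append_vert_zero, take_vert]
  · simp only [hl, append_vert_length, drop_vert, drop_length]
    congr 1
    omega

def toPath (w : G.Walk) (h : Set.InjOn w.vert (Set.Iic w.length)) : G.Path where
  n := w.length
  verts i := w.vert i
  steps i := w.kind i
  inj i j hij := Fin.ext (h (Nat.lt_succ_iff.1 i.isLt) (Nat.lt_succ_iff.1 j.isLt) hij)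
  ok i := w.ok i i.isLt

theorem Active.not_blocked_toPath (hw : w.Active B) (h : Set.InjOn w.vert (Set.Iic w.length)) :
    ¬ G.Blocked (w.toPath h) B := by
  rintro ⟨j, hj, ⟨hnc, hmem⟩ | ⟨hc, hnd⟩⟩
  · exact (hw j hj j.isLt).2 hnc hmem
  · obtain ⟨b, hb, hd⟩ := (hw j hj j.isLt).1 hc
    exact hnd b hb hd

end Walk

def Path.toWalk (p : G.Path) : G.Walk where
  length := p.n
  vert i := if h : i < p.n + 1 then p.verts ⟨i, h⟩ else p.verts 0
  kind i := if h : i < p.n then p.steps ⟨i, h⟩ else .fwd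
  ok i hi := by simpa [hi, show i < p.n + 1 by omega] using p.ok ⟨i, hi⟩

theorem Path.active_toWalk {p : G.Path} (hp : ¬ G.Blocked p B) : p.toWalk.Active B := by
  intro i hi hin
  simp only [Path.toWalk] at hin
  have hopen : G.OpenAt B (p.verts (⟨i, hin⟩ : Fin p.n).castSucc) (p.steps ⟨i - 1, by omega⟩)
      (p.steps ⟨i, hin⟩) :=
    ⟨fun hc => by_contra fun hnot => hp ⟨⟨i, hin⟩, hi, .inr ⟨hc, fun b hb hd => hnot ⟨b, hb, hd⟩⟩⟩,
      fun hnc hmem => hp ⟨⟨i, hin⟩, hi, .inl ⟨hnc, hmem⟩⟩⟩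
  simpa [Path.toWalk, hin, show i ≤ p.n by omega, show i - 1 < p.n by omega] using hopen

def mConnected (G : MixedGraph V) (B S : Set V) : Set V :=
  {u | ∃ w : G.Walk, w.vert 0 = u ∧ w.vert w.length ∈ S ∧ w.Active B}

theorem msep_iff_disjoint {A C : Set V} : G.MSep A C B ↔ Disjoint A (G.mConnected B C) := by
  refine ⟨fun hsep => Set.disjoint_left.2 ?_, fun hdisj p ha hc => by_contra fun hp => ?_⟩
  · rintro a ha ⟨w, rfl, hc, hw⟩
    obtain ⟨w', h0, hl, hw', hinj⟩ := hw.exists_injOn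
    exact hw'.not_blocked_toPath hinj
      (hsep _ (show w'.vert 0 ∈ A from h0 ▸ ha) (show w'.vert w'.length ∈ C from hl ▸ hc))
  · refine Set.disjoint_left.1 hdisj ha ⟨p.toWalk, ?_, ?_, Path.active_toWalk hp⟩
    · simp [Path.toWalk]
    · simp only [Path.toWalk, dif_pos (Nat.lt_succ_self _)]
      exact hc

theorem mem_mConnected_of_append {S : Set V} {w₁ w₂ : G.Walk}
    (h : w₁.vert w₁.length = w₂.vert 0) (h₁ : w₁.Active B) (h₂ : w₂.Active B)
    (hS : w₂.vert w₂.length ∈ S)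
    (hjoin : 0 < w₁.length → 0 < w₂.length →
      G.OpenAt B (w₂.vert 0) (w₁.kind (w₁.length - 1)) (w₂.kind 0)) :
    w₁.vert 0 ∈ G.mConnected B S :=
  ⟨w₁.append w₂ h, Walk.append_vert_zero h, (Walk.append_vert_length h).symm ▸ hS,
    h₁.append h₂ hjoin⟩

theorem exists_active_walk_of_reflTransGen {k : StepKind} (hk : ¬ (k.headRight ∧ k.headLeft))
    {x y : V} (h : Relation.ReflTransGen (fun a b => G.stepOK a b k ∧ a ∉ B ∧ b ∉ B) x y) :
    ∃ w : G.Walk, w.vert 0 = x ∧ w.vert w.length = y ∧ w.Active B ∧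
      ∀ i < w.length, w.kind i = k := by
  induction h with
  | refl =>
    exact ⟨.nil x, rfl, rfl, fun i _ hi => absurd hi (by simp), fun i hi => absurd hi (by simp)⟩
  | @tail b c _ hbc ih =>
    obtain ⟨w, h0, hl, hw, hwk⟩ := ih
    have hjoin : w.vert w.length = (Walk.single k hbc.1).vert 0 := by simp [hl]
    refine ⟨w.append _ hjoin, by simp [h0], by simp [Walk.single], ?_, ?_⟩
    · refine hw.append (fun i hi hin => absurd hin (by simp; omega)) fun hpos _ => ?_
      rw [hwk _ (by omega)]
      exact ⟨fun hc => absurd hc hk, fun _ => by simpa using hbc.2.1⟩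
    · intro i hi
      simp only [Walk.append, Walk.single_length] at hi ⊢
      split_ifs with h
      exacts [hwk i h, rfl]

theorem mem_mConnected_trans {A C : Set V} (hanc : G.ancestorsOf (A ∪ B ∪ C) = Set.univ)
    (hsep : G.MSep A C B) {u v : V} (hu : u ∈ G.mConnected B {v})
    (hv : v ∈ G.mConnected B C) (hvB : v ∉ B) : u ∈ G.mConnected B C := by
  obtain ⟨w, rfl, hwv, hw⟩ := hu
  rw [Set.mem_singleton_iff] at hwv
  obtain ⟨q, hq0, hqC, hq⟩ := hv
  obtain ⟨t, ht, hvt⟩ : v ∈ G.ancestorsOf (A ∪ B ∪ C) := hanc ▸ Set.mem_univ v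
  rcases mem_ancestorsOf_or_reflTransGen hvt with hvanc | ⟨htB, hchain⟩
  · exact mem_mConnected_of_append (hwv.trans hq0.symm) hw hq hqC
      fun _ _ => ⟨fun _ => hq0 ▸ hvanc, fun _ => hq0 ▸ hvB⟩
  rcases ht with (htA | htB') | htC
  · obtain ⟨r, rfl, hrv, hr, hrk⟩ := exists_active_walk_of_reflTransGen (k := .bwd)
      (by simp [StepKind.headRight])
      (Relation.ReflTransGen.mono (fun _ _ h => ⟨h.1, h.2.2, h.2.1⟩) _ _
        (Relation.ReflTransGen.swap _ _ hchain))
    have htC : r.vert 0 ∈ G.mConnected B C := mem_mConnected_of_append (hrv.trans hq0.symm) hr hq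
      hqC fun hpos _ => ⟨fun hc => (hrk (r.length - 1) (by omega) ▸ hc.1).elim,
        fun _ => hq0 ▸ hvB⟩
    exact absurd htC (Set.disjoint_left.1 (msep_iff_disjoint.1 hsep) htA)
  · exact absurd htB' htB
  · obtain ⟨r, hr0, hrt, hr, hrk⟩ := exists_active_walk_of_reflTransGen (k := .fwd)
      (by simp [StepKind.headLeft]) hchain
    exact mem_mConnected_of_append (hwv.trans hr0.symm) hw hr (hrt ▸ htC)
      fun _ hpos => ⟨fun hc => (hrk 0 hpos ▸ hc.2).elim, fun _ => hr0 ▸ hvB⟩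

theorem mConnected_union_mConnected_diff_subset {A C : Set V}
    (hanc : G.ancestorsOf (A ∪ B ∪ C) = Set.univ) (hsep : G.MSep A C B) :
    G.mConnected B (C ∪ (G.mConnected B C \ (A ∪ B))) ⊆ G.mConnected B C := by
  rintro u ⟨w, rfl, hv | ⟨hvC, hvAB⟩, hw⟩
  · exact ⟨w, rfl, hv, hw⟩
  · exact mem_mConnected_trans hanc hsep ⟨w, rfl, rfl, hw⟩ hvC fun h => hvAB (.inr h)

end MixedGraph

theorem stmt3_general {V : Type*} (G : MixedGraph V)
    (A B C : Set V)
    (hAB : Disjoint A B) (hAC : Disjoint A C)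
    (hanc : G.ancestorsOf (A ∪ B ∪ C) = Set.univ)
    (hsep : G.MSep A C B) :
    ∃ A' C' : Set V, A ⊆ A' ∧ C ⊆ C' ∧ Disjoint A' C' ∧
      A' ∪ B ∪ C' = Set.univ ∧ G.MSep A' C' B := by
  set C' := C ∪ (G.mConnected B C \ (A ∪ B))
  have hAC' : Disjoint A (G.mConnected B C) := MixedGraph.msep_iff_disjoint.1 hsep
  refine ⟨(B ∪ C')ᶜ, C', fun a ha => ?_, Set.subset_union_left,
    disjoint_compl_left_iff.2 Set.subset_union_right,
    by rw [Set.union_assoc, Set.compl_union_self], ?_⟩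
  · rintro (haB | haC | ⟨-, haAB⟩)
    exacts [hAB.ne_of_mem ha haB rfl, hAC.ne_of_mem ha haC rfl, haAB (.inl ha)]
  · refine MixedGraph.msep_iff_disjoint.2 (Set.disjoint_left.2 fun u hu huC' => ?_)
    have huC := MixedGraph.mConnected_union_mConnected_diff_subset hanc hsep huC'
    by_cases huA : u ∈ A
    · exact Set.disjoint_left.1 hAC' huA huC
    · exact hu (.inr (.inr ⟨huC, fun h => h.elim huA fun huB => hu (.inl huB)⟩))

/-- extension of m-separated sets in an ADMG whose nodes are all
ancestors of `A ∪ B ∪ C`. -/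
theorem stmt3 {V : Type*} [Fintype V] (G : MixedGraph V)
    (hacyc : G.Acyclic)
    (A B C : Set V)
    (hAB : Disjoint A B) (hAC : Disjoint A C) (hBC : Disjoint B C)
    (hanc : G.ancestorsOf (A ∪ B ∪ C) = Set.univ)
    (hsep : G.MSep A C B) :
    ∃ A' C' : Set V, A ⊆ A' ∧ C ⊆ C' ∧ Disjoint A' C' ∧
      A' ∪ B ∪ C' = Set.univ ∧ G.MSep A' C' B :=
  stmt3_general G A B C hAB hAC hanc hsep
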